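/- In the graph G_n (n ≥ 2) defined below, if S = {u_{k+1},…,u_n} with 1 ≤ k ≤ n−2, then the set of vertices v ∉ S adjacent to some vertex of S with N[v] ⊄ N[S] equals {u_k}. -/
import Mathlib


open SimpleGraph

variable {V W : Type*}

/-- Closed neighborhood of a vertex. -/
def closedNbhd (G : SimpleGraph V) (v : V) : Set V := insert v (G.neighborSet v)

/-- `C` is a dominating set of `G`. -/
def IsDomSet (G : SimpleGraph V) (C : Set V) : Prop :=
  ∀ v : V, v ∈ C ∨ ∃ c ∈ C, G.Adj c v

/-- `C` is a connected dominating set of `G`. -/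
def IsConnDomSet (G : SimpleGraph V) (C : Set V) : Prop :=
  IsDomSet G C ∧ (G.induce C).Connected

/-- The connected domination number. -/
noncomputable def gammaC (G : SimpleGraph V) : ℕ :=
  sInf {n | ∃ C : Set V, IsConnDomSet G C ∧ C.ncard = n}

/-- Base relation for the graph `G_n`: `Sum.inl i` is the vertex `u_i`, and
`Sum.inr (k, t)` is `x_{t+1}`, `y_{t+1}`, `z_{t+1}` for `k = 0, 1, 2`. -/
def GnRel (n : ℕ) :
    (Fin (n + 1) ⊕ (Fin 3 × Fin (n - 1))) → (Fin (n + 1) ⊕ (Fin 3 × Fin (n - 1))) → Prop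
  | Sum.inl i, Sum.inl j => i.val + 1 = j.val
  | Sum.inl i, Sum.inr (k, t) => (k = 0 ∧ i.val = t.val + 1) ∨ i.val = t.val + 2
  | Sum.inr (k, t), Sum.inr (k', t') => t = t' ∧ k.val + 1 = k'.val
  | Sum.inr _, Sum.inl _ => False

/-- The graph `G_n`. -/
def Gn (n : ℕ) : SimpleGraph (Fin (n + 1) ⊕ (Fin 3 × Fin (n - 1))) :=
  SimpleGraph.fromRel (GnRel n)

lemma gn_adj (n : ℕ) (a b : Fin (n + 1) ⊕ (Fin 3 × Fin (n - 1))) :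
    (Gn n).Adj a b ↔ a ≠ b ∧ (GnRel n a b ∨ GnRel n b a) := Iff.rfl

lemma mem_cn (n : ℕ) (v w : Fin (n + 1) ⊕ (Fin 3 × Fin (n - 1))) :
    w ∈ closedNbhd (Gn n) v ↔ w = v ∨ (Gn n).Adj v w := by
  simp [closedNbhd]

theorem stmt_11 (n k : ℕ) (hn : 2 ≤ n) (hk1 : 1 ≤ k) (hk2 : k ≤ n - 2) :
    {v | v ∉ ({v | ∃ i : Fin (n + 1), k + 1 ≤ i.val ∧ v = Sum.inl i} :
          Set (Fin (n + 1) ⊕ (Fin 3 × Fin (n - 1)))) ∧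
        (∃ s ∈ ({v | ∃ i : Fin (n + 1), k + 1 ≤ i.val ∧ v = Sum.inl i} :
          Set (Fin (n + 1) ⊕ (Fin 3 × Fin (n - 1)))), (Gn n).Adj v s) ∧
        ¬ closedNbhd (Gn n) v ⊆
          ⋃ s ∈ ({v | ∃ i : Fin (n + 1), k + 1 ≤ i.val ∧ v = Sum.inl i} :
            Set (Fin (n + 1) ⊕ (Fin 3 × Fin (n - 1)))), closedNbhd (Gn n) s} =
      {Sum.inl ⟨k, by omega⟩} := by
  have hkn : k + 1 ≤ n - 1 := by omega
  ext v
  simp only [Set.mem_setOf_eq, Set.mem_singleton_iff]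
  constructor
  · rintro ⟨hvS, ⟨s, ⟨i, hi, rfl⟩, hadj⟩, hsub⟩
    rw [gn_adj] at hadj
    obtain ⟨hne, hrel⟩ := hadj
    match v with
    | Sum.inl j =>
      -- j ≤ k from hvS, and j adjacent to i ≥ k+1
      have hjk : j.val ≤ k := by
        by_contra h
        exact hvS ⟨j, by omega, rfl⟩
      have : j.val = k := by
        rcases hrel with h | h
        · simp only [GnRel] at h; omega
        · simp only [GnRel] at h; omega
      congr 1
      exact Fin.ext this
    | Sum.inr (c, t) =>
      -- derive t.val + 1 ≥ k, then contradiction with hsub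
      exfalso
      have ht : k ≤ t.val + 1 := by
        rcases hrel with h | h
        · simp only [GnRel] at h
        · simp only [GnRel] at h
          rcases h with ⟨_, h⟩ | h <;> omega
      apply hsub
      intro w hw
      rw [mem_cn] at hw
      have ht2 : t.val + 2 ≤ n := by
        have := t.isLt; omega
      -- helper: inr (c', t) is in the union via s = inl (t+2)
      have hinr : ∀ c' : Fin 3, (Sum.inr (c', t) : Fin (n + 1) ⊕ (Fin 3 × Fin (n - 1))) ∈
          ⋃ s ∈ ({v | ∃ i : Fin (n + 1), k + 1 ≤ i.val ∧ v = Sum.inl i} :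
            Set (Fin (n + 1) ⊕ (Fin 3 × Fin (n - 1)))), closedNbhd (Gn n) s := by
        intro c'
        refine Set.mem_biUnion ⟨⟨t.val + 2, by omega⟩, by simp; omega, rfl⟩ ?_
        rw [mem_cn]
        right
        rw [gn_adj]
        exact ⟨by simp, Or.inl (Or.inr rfl)⟩
      rcases hw with rfl | hadj2
      · exact hinr c
      · rw [gn_adj] at hadj2
        obtain ⟨hne2, hrel2⟩ := hadj2
        match w with
        | Sum.inl m =>
          -- m = t+1 or t+2, so m ≥ k
          have hm : k ≤ m.val ∧ m.val ≤ t.val + 2 := by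
            rcases hrel2 with h | h
            · simp only [GnRel] at h
            · simp only [GnRel] at h
              rcases h with ⟨_, h⟩ | h <;> omega
          by_cases hmk : k + 1 ≤ m.val
          · exact Set.mem_biUnion ⟨m, hmk, rfl⟩ (by rw [mem_cn]; left; rfl)
          · -- m = k, use s = inl (k+1)
            have hmv : m.val = k := by omega
            refine Set.mem_biUnion (x := Sum.inl ⟨k + 1, by omega⟩)
              ⟨⟨k + 1, by omega⟩, by simp, rfl⟩ ?_
            rw [mem_cn]
            right
            rw [gn_adj]
            refine ⟨fun h => ?_, Or.inr ?_⟩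
            · have := congrArg Fin.val (Sum.inl.inj h)
              simp at this
              omega
            · simp only [GnRel]
              omega
        | Sum.inr (c', t') =>
          have htt : t' = t := by
            rcases hrel2 with h | h
            · simp only [GnRel] at h; exact h.1.symm
            · simp only [GnRel] at h; exact h.1
          subst htt
          exact hinr c'
  · rintro rfl
    refine ⟨?_, ⟨Sum.inl ⟨k + 1, by omega⟩, ⟨⟨k + 1, by omega⟩, by simp, rfl⟩, ?_⟩, ?_⟩
    · rintro ⟨i, hi, hv⟩
      simp only [Sum.inl.injEq] at hv
      subst hv
      simp at hi
    · rw [gn_adj]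
      refine ⟨by simp only [ne_eq, Sum.inl.injEq, Fin.mk.injEq]; omega, Or.inl ?_⟩
      simp only [GnRel]
    · intro hsub
      have hw : (Sum.inl ⟨k - 1, by omega⟩ : Fin (n + 1) ⊕ (Fin 3 × Fin (n - 1))) ∈
          closedNbhd (Gn n) (Sum.inl ⟨k, by omega⟩) := by
        rw [mem_cn]
        right
        rw [gn_adj]
        refine ⟨by simp only [ne_eq, Sum.inl.injEq, Fin.mk.injEq]; omega, Or.inr ?_⟩
        simp only [GnRel]
        omega
      have := hsub hw
      simp only [Set.mem_iUnion] at this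
      obtain ⟨s, ⟨i, hi, rfl⟩, hmem⟩ := this
      rw [mem_cn] at hmem
      rcases hmem with h | h
      · simp only [Sum.inl.injEq, Fin.ext_iff] at h
        omega
      · rw [gn_adj] at h
        rcases h.2 with h | h <;> simp only [GnRel] at h <;> omega
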